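/- Relation between the quaternion quadratic phase Wigner–Ville distribution and the STQQPFT: (W^{∧₁,∧₂}_ℍ(f,g))(x,ξ) = 4 ψ^i_{∧₁}(x₁,ξ₁) (S^{∧₁',∧₂'}_{ℍ,g̃} f)(2x, ξ'_x) ψ^j_{∧₂}(x₂,ξ₂), where ∧ₗ' = (4Aₗ, 2Bₗ, Cₗ, 2Dₗ, Eₗ), g̃(t) = g(-t), ξ'_x = (ξ₁ - 4A₁x₁/B₁, ξ₂ - 4A₂x₂/B₂), and ψ^i_{∧₁}, ψ^j_{∧₂} are unit-modulus quaternion phase factors. In particular |(W^{∧₁,∧₂}_ℍ(f,g))(x,ξ)| = 4|(S^{∧₁',∧₂'}_{ℍ,g̃} f)(2x,ξ'_x)|. -/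

import Mathlib

open MeasureTheory Real
open scoped ENNReal

noncomputable section

/-- The real quaternions. -/
abbrev ℍ := Quaternion ℝ

/-- The quaternion imaginary unit `i`. -/
def qi : ℍ := ⟨0, 1, 0, 0⟩

/-- The quaternion imaginary unit `j`. -/
def qj : ℍ := ⟨0, 0, 1, 0⟩

/-- Exponential in the quaternions. -/
def qexp (q : ℍ) : ℍ := NormedSpace.exp q

/-- A parameter tuple `∧ = (A,B,C,D,E)` with `B ≠ 0` for quadratic phase transforms. -/
structure QPParams where
  A : ℝ
  B : ℝ
  C : ℝ
  D : ℝ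
  E : ℝ
  hB : B ≠ 0

/-- The QQPFT kernel with imaginary unit `i`. -/
def KerI (L : QPParams) (t ξ : ℝ) : ℍ :=
  (1 / Real.sqrt (2 * π)) •
    qexp (-(L.A * t ^ 2 + L.B * t * ξ + L.C * ξ ^ 2 + L.D * t + L.E * ξ) • qi)

/-- The QQPFT kernel with imaginary unit `j`. -/
def KerJ (L : QPParams) (t ξ : ℝ) : ℍ :=
  (1 / Real.sqrt (2 * π)) •
    qexp (-(L.A * t ^ 2 + L.B * t * ξ + L.C * ξ ^ 2 + L.D * t + L.E * ξ) • qj)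

/-- The two-sided quaternion quadratic phase Fourier transform. -/
def QQPFT (L1 L2 : QPParams) (f : ℝ × ℝ → ℍ) (ξ : ℝ × ℝ) : ℍ :=
  ∫ t : ℝ × ℝ, KerI L1 t.1 ξ.1 * f t * KerJ L2 t.2 ξ.2

/-- The two-sided quaternion Fourier transform. -/
def QFT (f : ℝ × ℝ → ℍ) (ξ : ℝ × ℝ) : ℍ :=
  ∫ t : ℝ × ℝ, ((1 / Real.sqrt (2 * π)) • qexp (-(t.1 * ξ.1) • qi)) * f t *
    ((1 / Real.sqrt (2 * π)) • qexp (-(t.2 * ξ.2) • qj))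

/-- The short time quaternion quadratic phase Fourier transform with window `g`. -/
def STQQPFT (L1 L2 : QPParams) (g f : ℝ × ℝ → ℍ) (x ξ : ℝ × ℝ) : ℍ :=
  ∫ t : ℝ × ℝ, KerI L1 t.1 ξ.1 * (f t * star (g (t - x))) * KerJ L2 t.2 ξ.2

/-- The symmetric real scalar inner product `⟨f,g⟩ = ∫ Sc[f ḡ]`. -/
def scInner (f g : ℝ × ℝ → ℍ) : ℝ := ∫ x : ℝ × ℝ, (f x * star (g x)).re

/-- The phase factor `φ^i_{∧,r}(k,ξ)`. -/
def phiI (L : QPParams) (r k ξ : ℝ) : ℍ :=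
  qexp (-(L.A * r ^ 2 * k ^ 2 + L.D * r * k + L.B * r * k * ξ
      - 4 * r ^ 2 * L.A ^ 2 * L.C * k ^ 2 / L.B ^ 2
      - 4 * r * L.A * L.C * k * ξ / L.B - 2 * r * L.A * L.E * k / L.B) • qi)

/-- The phase factor `φ^j_{∧,r}(k,ξ)`. -/
def phiJ (L : QPParams) (r k ξ : ℝ) : ℍ :=
  qexp (-(L.A * r ^ 2 * k ^ 2 + L.D * r * k + L.B * r * k * ξ
      - 4 * r ^ 2 * L.A ^ 2 * L.C * k ^ 2 / L.B ^ 2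
      - 4 * r * L.A * L.C * k * ξ / L.B - 2 * r * L.A * L.E * k / L.B) • qj)

/-- The two-sided quaternion quadratic phase Wigner–Ville distribution. -/
def QQPWVD (L1 L2 : QPParams) (f g : ℝ × ℝ → ℍ) (x ξ : ℝ × ℝ) : ℍ :=
  ∫ t : ℝ × ℝ, KerI L1 t.1 ξ.1 *
    (f (x + (1 / 2 : ℝ) • t) * star (g (x - (1 / 2 : ℝ) • t))) * KerJ L2 t.2 ξ.2

/-- The unit-modulus phase factor `ψ^i_{∧}(x,ξ)`. -/
def psiI (L : QPParams) (x ξ : ℝ) : ℍ :=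
  qexp (-(4 * L.A * x ^ 2 - 2 * L.B * x * ξ - 2 * L.D * x
      - 16 * L.A ^ 2 * L.C * x ^ 2 / L.B ^ 2
      + 8 * L.A * L.C * x * ξ / L.B + 4 * L.A * L.E * x / L.B) • qi)

/-- The unit-modulus phase factor `ψ^j_{∧}(x,ξ)`. -/
def psiJ (L : QPParams) (x ξ : ℝ) : ℍ :=
  qexp (-(4 * L.A * x ^ 2 - 2 * L.B * x * ξ - 2 * L.D * x
      - 16 * L.A ^ 2 * L.C * x ^ 2 / L.B ^ 2
      + 8 * L.A * L.C * x * ξ / L.B + 4 * L.A * L.E * x / L.B) • qj)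


/-!
Substituting `t = 2 (u - x)` turns the Wigner–Ville integral into a windowed one: the arguments
become `f u` and `g (2x - u)`, i.e. the reflected window `g̃` translated to `2x`, and the
Jacobian contributes the factor `4`. Completing the square in the quadratic phase then shows
that each kernel at `2 (u - x)` is the kernel of the parameters `∧'` at `u`, at the shifted
frequency `ξ - 4 A x / B`, times a phase that does not depend on `u`. These phases have unit
modulus and can be pulled out of the integral, to the left for `i` and to the right for `j`.
-/

theorem integral_mul_const_of_normedDivisionRing {α 𝕜 : Type*} [MeasurableSpace α]
    {μ : Measure α} [NormedDivisionRing 𝕜] [NormedAlgebra ℝ 𝕜] (f : α → 𝕜) (c : 𝕜) :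
    ∫ a, f a * c ∂μ = (∫ a, f a ∂μ) * c := by
  rcases eq_or_ne c 0 with rfl | hc
  · simp
  let e : 𝕜 ≃L[ℝ] 𝕜 := .equivOfInverse ((ContinuousLinearMap.mul ℝ 𝕜).flip c)
    ((ContinuousLinearMap.mul ℝ 𝕜).flip c⁻¹) (fun _ => by simp [hc]) (fun _ => by simp [hc])
  exact e.integral_comp_comm f

theorem integral_eq_abs_pow_smul_integral_comp_smul_sub {E F : Type*} [NormedAddCommGroup E]
    [NormedSpace ℝ E] [MeasurableSpace E] [BorelSpace E] [FiniteDimensional ℝ E] (μ : Measure E)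
    [μ.IsAddHaarMeasure] [NormedAddCommGroup F] [NormedSpace ℝ F] (f : E → F) {R : ℝ}
    (hR : R ≠ 0) (x : E) :
    ∫ t, f t ∂μ = |R ^ Module.finrank ℝ E| • ∫ u, f (R • (u - x)) ∂μ := by
  rw [integral_sub_right_eq_self (fun v => f (R • v)) x, Measure.integral_comp_smul, smul_smul,
    abs_inv, mul_inv_cancel₀ (abs_ne_zero.2 (pow_ne_zero _ hR)), one_smul]

theorem norm_qexp_of_re_eq_zero {q : ℍ} (hq : q.re = 0) : ‖qexp q‖ = 1 := by
  rw [qexp, Quaternion.norm_exp, hq, NormedSpace.exp_zero, norm_one]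

theorem qexp_add_smul (a b : ℝ) (u : ℍ) : qexp ((a + b) • u) = qexp (a • u) * qexp (b • u) := by
  have hball (q : ℍ) : q ∈ Metric.eball 0 (NormedSpace.expSeries ℝ ℍ).radius :=
    (NormedSpace.expSeries_radius_eq_top ℝ ℍ).symm ▸ edist_lt_top _ _
  rw [qexp, qexp, qexp, add_smul]
  exact NormedSpace.exp_add_of_commute_of_mem_ball (((Commute.refl u).smul_left a).smul_right b)
    (hball _) (hball _)

namespace QPParams

/-- The parameters `∧' = (4A, 2B, C, 2D, E)` of the STQQPFT attached to the QQPWVD of `∧`. -/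
def wvd (L : QPParams) : QPParams :=
  ⟨4 * L.A, 2 * L.B, L.C, 2 * L.D, L.E, mul_ne_zero two_ne_zero L.hB⟩

variable (L : QPParams) (x ξ u : ℝ)

theorem norm_psiI : ‖psiI L x ξ‖ = 1 :=
  norm_qexp_of_re_eq_zero (smul_zero _)

theorem norm_psiJ : ‖psiJ L x ξ‖ = 1 :=
  norm_qexp_of_re_eq_zero (smul_zero _)

theorem kerI_two_mul_sub :
    KerI L (2 * (u - x)) ξ = psiI L x ξ * KerI L.wvd u (ξ - 4 * L.A * x / L.B) := by
  have hB := L.hB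
  rw [KerI, KerI, psiI, mul_smul_comm, ← qexp_add_smul]
  congr 3
  simp only [wvd]
  field_simp
  ring

theorem kerJ_two_mul_sub :
    KerJ L (2 * (u - x)) ξ = KerJ L.wvd u (ξ - 4 * L.A * x / L.B) * psiJ L x ξ := by
  have hB := L.hB
  rw [KerJ, KerJ, psiJ, smul_mul_assoc, ← qexp_add_smul]
  congr 3
  simp only [wvd]
  field_simp
  ring

end QPParams

theorem qqpwvd_eq_four_smul_integral (L1 L2 : QPParams) (f g : ℝ × ℝ → ℍ) (x ξ : ℝ × ℝ) :
    QQPWVD L1 L2 f g x ξ = (4 : ℝ) • ∫ u : ℝ × ℝ,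
      KerI L1 (2 * (u.1 - x.1)) ξ.1 * (f u * star (g (-(u - (2 : ℝ) • x)))) *
        KerJ L2 (2 * (u.2 - x.2)) ξ.2 := by
  have hplus (u : ℝ × ℝ) : x + (1 / 2 : ℝ) • (2 : ℝ) • (u - x) = u := by
    rw [smul_smul]; norm_num
  have hminus (u : ℝ × ℝ) : x - (1 / 2 : ℝ) • (2 : ℝ) • (u - x) = -(u - (2 : ℝ) • x) := by
    rw [smul_smul, two_smul]; norm_num; abel
  rw [QQPWVD, integral_eq_abs_pow_smul_integral_comp_smul_sub volume _ two_ne_zero x]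
  norm_num [hplus, hminus]

theorem qqpwvd_eq_stqqpft_general (L1 L2 : QPParams) (g f : ℝ × ℝ → ℍ)
    (x ξ : ℝ × ℝ) :
    QQPWVD L1 L2 f g x ξ =
      (4 : ℝ) • (psiI L1 x.1 ξ.1 *
        STQQPFT ⟨4 * L1.A, 2 * L1.B, L1.C, 2 * L1.D, L1.E, mul_ne_zero two_ne_zero L1.hB⟩
          ⟨4 * L2.A, 2 * L2.B, L2.C, 2 * L2.D, L2.E, mul_ne_zero two_ne_zero L2.hB⟩
          (fun t => g (-t)) f ((2 : ℝ) • x)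
          (ξ.1 - 4 * L1.A * x.1 / L1.B, ξ.2 - 4 * L2.A * x.2 / L2.B) *
        psiJ L2 x.2 ξ.2) ∧
    ‖QQPWVD L1 L2 f g x ξ‖ =
      4 * ‖STQQPFT ⟨4 * L1.A, 2 * L1.B, L1.C, 2 * L1.D, L1.E, mul_ne_zero two_ne_zero L1.hB⟩
          ⟨4 * L2.A, 2 * L2.B, L2.C, 2 * L2.D, L2.E, mul_ne_zero two_ne_zero L2.hB⟩
          (fun t => g (-t)) f ((2 : ℝ) • x)
          (ξ.1 - 4 * L1.A * x.1 / L1.B, ξ.2 - 4 * L2.A * x.2 / L2.B)‖ := by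
  have key : QQPWVD L1 L2 f g x ξ = (4 : ℝ) • (psiI L1 x.1 ξ.1 *
      STQQPFT L1.wvd L2.wvd (fun t => g (-t)) f ((2 : ℝ) • x)
        (ξ.1 - 4 * L1.A * x.1 / L1.B, ξ.2 - 4 * L2.A * x.2 / L2.B) * psiJ L2 x.2 ξ.2) := by
    rw [qqpwvd_eq_four_smul_integral, STQQPFT]
    congr 1
    rw [← smul_eq_mul (psiI _ _ _), ← integral_smul, ← integral_mul_const_of_normedDivisionRing]
    congr 1
    funext u
    rw [QPParams.kerI_two_mul_sub, QPParams.kerJ_two_mul_sub, smul_eq_mul]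
    simp only [mul_assoc]
  refine ⟨key, ?_⟩
  rw [key, norm_smul, norm_mul, norm_mul, QPParams.norm_psiI, QPParams.norm_psiJ]
  norm_num
  rfl

/-- relation between the QQPWVD and the STQQPFT. -/
theorem qqpwvd_eq_stqqpft (L1 L2 : QPParams) (g f : ℝ × ℝ → ℍ)
    (hg2 : MemLp g 2 volume) (hgi : MemLp g ⊤ volume) (hf : MemLp f 2 volume)
    (x ξ : ℝ × ℝ) :
    QQPWVD L1 L2 f g x ξ =
      (4 : ℝ) • (psiI L1 x.1 ξ.1 *
        STQQPFT ⟨4 * L1.A, 2 * L1.B, L1.C, 2 * L1.D, L1.E, mul_ne_zero two_ne_zero L1.hB⟩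
          ⟨4 * L2.A, 2 * L2.B, L2.C, 2 * L2.D, L2.E, mul_ne_zero two_ne_zero L2.hB⟩
          (fun t => g (-t)) f ((2 : ℝ) • x)
          (ξ.1 - 4 * L1.A * x.1 / L1.B, ξ.2 - 4 * L2.A * x.2 / L2.B) *
        psiJ L2 x.2 ξ.2) ∧
    ‖QQPWVD L1 L2 f g x ξ‖ =
      4 * ‖STQQPFT ⟨4 * L1.A, 2 * L1.B, L1.C, 2 * L1.D, L1.E, mul_ne_zero two_ne_zero L1.hB⟩
          ⟨4 * L2.A, 2 * L2.B, L2.C, 2 * L2.D, L2.E, mul_ne_zero two_ne_zero L2.hB⟩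
          (fun t => g (-t)) f ((2 : ℝ) • x)
          (ξ.1 - 4 * L1.A * x.1 / L1.B, ξ.2 - 4 * L2.A * x.2 / L2.B)‖ :=
  qqpwvd_eq_stqqpft_general L1 L2 g f x ξ
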